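/- arXiv:2108.13199 — 2 statements merged into one kernel-verified Lean document; each statement's English description precedes it below -/
import Mathlib

section
/- The sum of (ln p)/p over primes p ≤ x equals ln x + O(1) as x → ∞. -/
open Finset Real Chebyshev
open scoped Nat

/-!
Legendre's formula writes `log n!` as `∑_{p ≤ n} v_p(n!) log p`, and `n/p - 1 ≤ v_p(n!) ≤ n/(p-1)`.
Against `n log n - n ≤ log n! ≤ n log n`, the lower estimate costs at most `θ(n) ≤ n log 4` and the
upper one at most `n ∑_p log p / (p(p-1))`, a convergent series. Dividing by `n` gives
`∑_{p ≤ n} log p / p = log n + O(1)`, and `log x - log ⌊x⌋ ≤ 1`.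
-/

theorem Nat.div_le_factorization_factorial {p : ℕ} (hp : p.Prime) (n : ℕ) :
    n / p ≤ (n !).factorization p :=
  calc n / p ≤ (n / p)!.factorization p + n / p := le_add_self
    _ = (p * (n / p))!.factorization p := (factorization_factorial_mul hp).symm
    _ ≤ (n !).factorization p :=
      (factorization_le_iff_dvd (factorial_ne_zero _) (factorial_ne_zero _)).mpr
        (factorial_dvd_factorial (mul_div_le n p)) p

theorem div_sub_one_le_factorization_factorial {p : ℕ} (hp : p.Prime) (n : ℕ) :
    (n : ℝ) / p - 1 ≤ (n !).factorization p := by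
  have hfloor := Nat.lt_floor_add_one ((n : ℝ) / p)
  rw [Nat.floor_div_eq_div] at hfloor
  have hdiv : ((n / p : ℕ) : ℝ) ≤ (n !).factorization p := by
    exact_mod_cast Nat.div_le_factorization_factorial hp n
  linarith

theorem factorization_factorial_le_div_sub_one {p : ℕ} (hp : p.Prime) (n : ℕ) :
    ((n !).factorization p : ℝ) ≤ n / (p - 1) :=
  calc ((n !).factorization p : ℝ) ≤ ((n / (p - 1) : ℕ) : ℝ) := by
        exact_mod_cast Nat.factorization_factorial_le_div_pred hp n
    _ ≤ (n : ℝ) / ((p - 1 : ℕ) : ℝ) := Nat.cast_div_le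
    _ = n / (p - 1) := by rw [Nat.cast_sub hp.one_le, Nat.cast_one]

theorem log_factorial_eq_sum_primesLE (n : ℕ) :
    log n ! = ∑ p ∈ Nat.primesLE n, (n !).factorization p * log p := by
  have hsupp : (n !).factorization.support ⊆ Nat.primesLE n := fun p hp => by
    rw [Nat.support_factorization] at hp
    have hp' := Nat.prime_of_mem_primeFactors hp
    exact Nat.mem_primesLE.mpr ⟨hp'.dvd_factorial.mp (Nat.dvd_of_mem_primeFactors hp), hp'⟩
  conv_lhs => rw [← Nat.prod_factorization_pow_eq_self (Nat.factorial_ne_zero n),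
    Finsupp.prod_of_support_subset _ hsupp _ fun _ _ => pow_zero _]
  push_cast
  rw [log_prod fun p hp =>
    pow_ne_zero _ (Nat.cast_ne_zero.mpr (Nat.prime_of_mem_primesLE hp).ne_zero)]
  simp_rw [log_pow]

theorem log_factorial_le_mul_log (n : ℕ) : log n ! ≤ n * log n := by
  rw [← log_pow]
  exact log_le_log (by positivity) (by exact_mod_cast Nat.factorial_le_pow n)

theorem mul_log_sub_le_log_factorial (n : ℕ) : n * log n - n ≤ log n ! := by
  rcases n.eq_zero_or_pos with rfl | hn
  · simp
  have h := pow_div_factorial_le_exp (x := n) (Nat.cast_nonneg n) n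
  rw [div_le_iff₀ (by positivity), ← log_le_log_iff (by positivity) (by positivity),
    log_mul (by positivity) (by positivity), log_exp, log_pow] at h
  linarith

theorem log_div_mul_sub_one_nonneg (m : ℕ) : 0 ≤ log m / (m * (m - 1)) := by
  rcases m.eq_zero_or_pos with rfl | hm
  · simp
  have : (1 : ℝ) ≤ m := by exact_mod_cast hm
  have : 0 ≤ (m : ℝ) - 1 := by linarith
  positivity

theorem summable_log_div_mul_sub_one :
    Summable fun m : ℕ => log m / (m * (m - 1)) := by
  refine .of_nonneg_of_le log_div_mul_sub_one_nonneg (fun m => ?_)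
    ((summable_nat_rpow_inv.mpr (by norm_num : (1 : ℝ) < 3 / 2)).mul_left 4)
  rcases lt_or_ge m 2 with hm | hm
  · interval_cases m <;> norm_num
  set s : ℝ := (m : ℝ) ^ (1 / 2 : ℝ) with hs
  have hs2 : s ^ 2 = m := by rw [hs, ← rpow_natCast, ← rpow_mul (by positivity)]; norm_num
  have hm32 : (m : ℝ) ^ (3 / 2 : ℝ) = s ^ 3 := by
    rw [hs, ← rpow_natCast, ← rpow_mul (by positivity)]; norm_num
  have hlog : log m ≤ 2 * s := by
    have := log_le_rpow_div (Nat.cast_nonneg m) (by norm_num : (0 : ℝ) < 1 / 2)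
    rw [← hs] at this; linarith
  have hm' : (2 : ℝ) ≤ m := by exact_mod_cast hm
  rw [hm32, ← one_div, mul_one_div, div_le_div_iff₀ (by nlinarith) (by positivity)]
  nlinarith [mul_le_mul_of_nonneg_right hlog (by positivity : 0 ≤ s ^ 3)]

theorem mul_sum_primesLE_log_div_sub_theta_le_log_factorial (n : ℕ) :
    n * ∑ p ∈ Nat.primesLE n, log p / p - θ n ≤ log n ! := by
  rw [theta_eq_sum_primesLE_log, log_factorial_eq_sum_primesLE, mul_sum, ← sum_sub_distrib]
  refine sum_le_sum fun p hp => ?_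
  calc n * (log p / p) - log p = (n / p - 1) * log p := by ring
    _ ≤ _ := mul_le_mul_of_nonneg_right
      (div_sub_one_le_factorization_factorial (Nat.prime_of_mem_primesLE hp) n)
      (log_natCast_nonneg p)

theorem log_factorial_le_mul_sum_primesLE_log_div_add_mul_tsum (n : ℕ) :
    log n ! ≤ n * ∑ p ∈ Nat.primesLE n, log p / p +
      n * ∑' m : ℕ, log m / (m * (m - 1)) := by
  have hterm : ∀ p ∈ Nat.primesLE n, ((n !).factorization p : ℝ) * log p ≤
      n * (log p / p) + n * (log p / (p * (p - 1))) := fun p hp => by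
    have hp := Nat.prime_of_mem_primesLE hp
    have hp1 : (1 : ℝ) < p := by exact_mod_cast hp.one_lt
    calc ((n !).factorization p : ℝ) * log p ≤ n / (p - 1) * log p :=
          mul_le_mul_of_nonneg_right (factorization_factorial_le_div_sub_one hp n)
            (log_natCast_nonneg p)
      _ = n * (log p / p) + n * (log p / (p * (p - 1))) := by
          field_simp [(sub_pos.mpr hp1).ne']
          ring
  have hprimes : ∑ p ∈ Nat.primesLE n, log p / (p * (p - 1)) ≤
      ∑' m : ℕ, log m / (m * (m - 1)) :=
    summable_log_div_mul_sub_one.sum_le_tsum _ fun m _ => log_div_mul_sub_one_nonneg m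
  calc log n ! ≤ ∑ p ∈ Nat.primesLE n, (n * (log p / p) + n * (log p / (p * (p - 1)))) := by
        rw [log_factorial_eq_sum_primesLE]; exact sum_le_sum hterm
    _ = n * ∑ p ∈ Nat.primesLE n, log p / p +
          n * ∑ p ∈ Nat.primesLE n, log p / (p * (p - 1)) := by
        rw [sum_add_distrib, mul_sum, mul_sum]
    _ ≤ _ := by gcongr

theorem abs_sum_primesLE_log_div_sub_log_le (n : ℕ) :
    |∑ p ∈ Nat.primesLE n, log p / p - log n| ≤
      log 4 + 1 + ∑' m : ℕ, log m / (m * (m - 1)) := by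
  set S := ∑ p ∈ Nat.primesLE n, log p / p
  set K := ∑' m : ℕ, log m / (m * (m - 1))
  have hK : 0 ≤ K := tsum_nonneg log_div_mul_sub_one_nonneg
  have hlog4 : 0 ≤ log 4 := log_nonneg (by norm_num)
  rcases n.eq_zero_or_pos with rfl | hn
  · simp [S]; positivity
  have hn : (0 : ℝ) < n := by exact_mod_cast hn
  have htheta : θ n ≤ log 4 * n := theta_le_log4_mul_x (Nat.cast_nonneg n)
  have hlow := mul_sum_primesLE_log_div_sub_theta_le_log_factorial n
  have hup := log_factorial_le_mul_sum_primesLE_log_div_add_mul_tsum n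
  have hS_le : S - log n ≤ log 4 :=
    le_of_mul_le_mul_left (by linarith [log_factorial_le_mul_log n]) hn
  have hS_ge : log n - S ≤ 1 + K :=
    le_of_mul_le_mul_left (by linarith [mul_log_sub_le_log_factorial n]) hn
  rw [abs_le]
  constructor <;> linarith

theorem abs_log_sub_log_floor_le {x : ℝ} (hx : 1 ≤ x) : |log x - log ⌊x⌋₊| ≤ 1 := by
  have hn : (1 : ℝ) ≤ ⌊x⌋₊ := by exact_mod_cast Nat.one_le_floor_iff x |>.mpr hx
  have hnx : (⌊x⌋₊ : ℝ) ≤ x := Nat.floor_le (by linarith)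
  have hxn : x < ⌊x⌋₊ + 1 := Nat.lt_floor_add_one x
  have hdiff : log x - log ⌊x⌋₊ ≤ x / ⌊x⌋₊ - 1 := by
    rw [← log_div (by positivity) (by positivity)]
    exact log_le_sub_one_of_pos (by positivity)
  have hratio : x / ⌊x⌋₊ ≤ 2 := by rw [div_le_iff₀ (by positivity)]; linarith
  rw [abs_le]
  constructor <;> linarith [log_le_log (by positivity) hnx]

theorem mertens_first :
    ∃ C : ℝ, ∀ x : ℝ, 2 ≤ x →
      |(∑ p ∈ (Finset.range (⌊x⌋₊ + 1)).filter Nat.Prime, Real.log p / p) - Real.log x| ≤ C := by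
  refine ⟨log 4 + 1 + ∑' m : ℕ, log m / (m * (m - 1)) + 1, fun x hx => ?_⟩
  rw [← Nat.primesLE_eq_filter_range]
  calc _ = |(∑ p ∈ Nat.primesLE ⌊x⌋₊, log p / p - log ⌊x⌋₊) + (log ⌊x⌋₊ - log x)| := by
        rw [sub_add_sub_cancel]
    _ ≤ _ := (abs_add_le _ _).trans (add_le_add (abs_sum_primesLE_log_div_sub_log_le _)
        (abs_sub_comm (log x) _ ▸ abs_log_sub_log_floor_le (by linarith)))
end

section
/- If an additive arithmetic function f satisfies f(m) = O(ln m), then ∑_{p^α ≤ n, α ≥ 1} f(p^α)/p^α = ∑_{p ≤ n} f(p)/p + O(1) as n → ∞. -/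
def ppow (n : ℕ) : Finset (ℕ × ℕ) :=
  (Finset.range (n+1) ×ˢ Finset.range (n+1)).filter
    (fun q => q.1.Prime ∧ 1 ≤ q.2 ∧ q.1 ^ q.2 ≤ n)

def primesLE (n : ℕ) : Finset ℕ := (Finset.range (n+1)).filter Nat.Prime

/-! The two sums differ exactly by the terms with `α ≥ 2`. Since `log x ≤ 4 x^{1/4}`, such a
term is `O((p^α)^{-3/4})`, and summing the geometric series over `α ≥ 2` leaves `O(p^{-3/2})`,
which is summable over `p`. -/

open Finset Real

def higherPrimePowers (n : ℕ) : Finset (ℕ × ℕ) :=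
  (ppow n).filter (fun q => 2 ≤ q.2)

lemma sum_ppow_eq_sum_primesLE_add (F : ℕ × ℕ → ℝ) (n : ℕ) :
    ∑ q ∈ ppow n, F q = ∑ p ∈ primesLE n, F (p, 1) + ∑ q ∈ higherPrimePowers n, F q := by
  have hfirst : (ppow n).filter (fun q => ¬ 2 ≤ q.2) = (primesLE n).image (fun p => (p, 1)) := by
    ext ⟨p, α⟩
    simp only [ppow, primesLE, mem_filter, mem_product, mem_range, mem_image, Prod.mk.injEq]
    constructor
    · rintro ⟨⟨⟨hp, -⟩, hprime, hα, -⟩, hα'⟩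
      obtain rfl : α = 1 := by omega
      exact ⟨p, ⟨hp, hprime⟩, rfl, rfl⟩
    · rintro ⟨p, ⟨hp, hprime⟩, rfl, rfl⟩
      have := hprime.two_le
      exact ⟨⟨⟨hp, by omega⟩, hprime, le_rfl, by simpa using Nat.lt_succ_iff.mp hp⟩, by omega⟩
  rw [higherPrimePowers, ← sum_filter_not_add_sum_filter _ (fun q => 2 ≤ q.2), hfirst,
    sum_image fun _ _ _ _ h => (Prod.mk.inj h).1]

lemma mem_higherPrimePowers {n : ℕ} {q : ℕ × ℕ} (hq : q ∈ higherPrimePowers n) :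
    q.1.Prime ∧ 2 ≤ q.2 ∧ q.1 ^ q.2 ≤ n := by
  simp only [higherPrimePowers, ppow, mem_filter] at hq
  exact ⟨hq.1.2.1, hq.2, hq.1.2.2.2⟩

lemma higherPrimePowers_subset (n : ℕ) :
    higherPrimePowers n ⊆ primesLE n ×ˢ Ico 2 (n + 1) := by
  intro q hq
  obtain ⟨hp, hα, hle⟩ := mem_higherPrimePowers hq
  have hα_lt : q.2 < q.1 ^ q.2 := Nat.lt_pow_self hp.one_lt
  have hp_le : q.1 ≤ q.1 ^ q.2 := Nat.le_self_pow (by omega) _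
  simp only [mem_product, primesLE, mem_filter, mem_range, mem_Ico]
  exact ⟨⟨by omega, hp⟩, hα, by omega⟩

lemma abs_div_le_rpow_of_abs_le_mul_log {x y C s : ℝ} (hx : 0 < x) (hs : s < 1)
    (hC : 0 ≤ C) (hy : |y| ≤ C * log x) : |y / x| ≤ C / (1 - s) * x ^ (-s) := by
  have hlog : log x ≤ x ^ (1 - s) / (1 - s) := log_le_rpow_div hx.le (by linarith)
  have hpow : x ^ (1 - s) / x = x ^ (-s) := by
    rw [← rpow_sub_one hx.ne']; ring_nf
  rw [abs_div, abs_of_pos hx, div_le_iff₀ hx]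
  calc |y| ≤ C * (x ^ (1 - s) / (1 - s)) := hy.trans (mul_le_mul_of_nonneg_left hlog hC)
    _ = C / (1 - s) * (x ^ (1 - s) / x) * x := by field_simp
    _ = C / (1 - s) * x ^ (-s) * x := by rw [hpow]

lemma sum_Ico_two_rpow_pow_le {s : ℝ} (hs : 0 < s) {p : ℕ} (hp : 2 ≤ p) (N : ℕ) :
    ∑ α ∈ Ico 2 N, ((p : ℝ) ^ (-s)) ^ α ≤ (p : ℝ) ^ (-(2 * s)) / (1 - 2 ^ (-s)) := by
  have hp' : (2 : ℝ) ≤ p := by exact_mod_cast hp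
  have hy : (p : ℝ) ^ (-s) ≤ 2 ^ (-s) := rpow_le_rpow_of_nonpos (by norm_num) hp' (by linarith)
  have hw : (2 : ℝ) ^ (-s) < 1 := rpow_lt_one_of_one_lt_of_neg (by norm_num) (by linarith)
  calc ∑ α ∈ Ico 2 N, ((p : ℝ) ^ (-s)) ^ α ≤ ((p : ℝ) ^ (-s)) ^ 2 / (1 - (p : ℝ) ^ (-s)) :=
        geom_sum_Ico_le_of_lt_one (by positivity) (hy.trans_lt hw)
    _ ≤ ((p : ℝ) ^ (-s)) ^ 2 / (1 - 2 ^ (-s)) := by gcongr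
    _ = (p : ℝ) ^ (-(2 * s)) / (1 - 2 ^ (-s)) := by
        rw [← rpow_mul_natCast (by positivity)]; ring_nf

lemma exists_sum_higherPrimePowers_rpow_le {s : ℝ} (hs : 1 / 2 < s) :
    ∃ K, ∀ n, ∑ q ∈ higherPrimePowers n, ((q.1 : ℝ) ^ q.2) ^ (-s) ≤ K := by
  have hsum : Summable fun m : ℕ => (m : ℝ) ^ (-(2 * s)) := summable_nat_rpow.mpr (by linarith)
  have hw : 0 < 1 - (2 : ℝ) ^ (-s) :=
    sub_pos.mpr (rpow_lt_one_of_one_lt_of_neg (by norm_num) (by linarith))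
  refine ⟨(∑' m : ℕ, (m : ℝ) ^ (-(2 * s))) / (1 - 2 ^ (-s)), fun n => ?_⟩
  calc ∑ q ∈ higherPrimePowers n, ((q.1 : ℝ) ^ q.2) ^ (-s)
      = ∑ q ∈ higherPrimePowers n, ((q.1 : ℝ) ^ (-s)) ^ q.2 :=
        sum_congr rfl fun q _ => (rpow_pow_comm (Nat.cast_nonneg _) _ _).symm
    _ ≤ ∑ q ∈ primesLE n ×ˢ Ico 2 (n + 1), ((q.1 : ℝ) ^ (-s)) ^ q.2 :=
        sum_le_sum_of_subset_of_nonneg (higherPrimePowers_subset n) fun _ _ _ => by positivity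
    _ = ∑ p ∈ primesLE n, ∑ α ∈ Ico 2 (n + 1), ((p : ℝ) ^ (-s)) ^ α := sum_product _ _ _
    _ ≤ ∑ p ∈ primesLE n, (p : ℝ) ^ (-(2 * s)) / (1 - 2 ^ (-s)) := by
        refine sum_le_sum fun p hp => sum_Ico_two_rpow_pow_le (by linarith) ?_ _
        exact (mem_filter.mp hp).2.two_le
    _ ≤ (∑' m : ℕ, (m : ℝ) ^ (-(2 * s))) / (1 - 2 ^ (-s)) := by
        rw [← sum_div]
        gcongr
        exact hsum.sum_le_tsum _ fun m _ => by positivity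

theorem additive_mean_reduction_general (f : ℕ → ℝ)
    (hbound : ∃ C : ℝ, ∀ m : ℕ, 2 ≤ m → |f m| ≤ C * Real.log m) :
    ∃ C : ℝ, ∀ n : ℕ, 2 ≤ n →
      |(∑ q ∈ ppow n, f (q.1 ^ q.2) / (q.1 : ℝ) ^ q.2)
        - ∑ p ∈ primesLE n, f p / p| ≤ C := by
  obtain ⟨C, hC⟩ := hbound
  have hC0 : 0 ≤ C := by
    have h2 := (abs_nonneg _).trans (hC 2 le_rfl)
    exact nonneg_of_mul_nonneg_left h2 (log_pos (by norm_num))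
  obtain ⟨K, hK⟩ := exists_sum_higherPrimePowers_rpow_le (s := 3 / 4) (by norm_num)
  refine ⟨C / (1 - 3 / 4) * K, fun n _ => ?_⟩
  rw [sum_ppow_eq_sum_primesLE_add]
  simp only [pow_one, add_sub_cancel_left]
  calc |∑ q ∈ higherPrimePowers n, f (q.1 ^ q.2) / (q.1 : ℝ) ^ q.2|
      ≤ ∑ q ∈ higherPrimePowers n, C / (1 - 3 / 4) * ((q.1 : ℝ) ^ q.2) ^ (-(3 / 4 : ℝ)) := by
        refine (abs_sum_le_sum_abs _ _).trans (sum_le_sum fun q hq => ?_)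
        obtain ⟨hp, hα, -⟩ := mem_higherPrimePowers hq
        have hm : 2 ≤ q.1 ^ q.2 := hp.two_le.trans (Nat.le_self_pow (by omega) _)
        have hfm := hC _ hm
        push_cast at hfm
        exact abs_div_le_rpow_of_abs_le_mul_log (pow_pos (by exact_mod_cast hp.pos) _)
          (by norm_num) hC0 hfm
    _ ≤ C / (1 - 3 / 4) * K := by
        rw [← mul_sum]
        gcongr
        exact hK n

theorem additive_mean_reduction (f : ℕ → ℝ)
    (hadd : ∀ a b : ℕ, Nat.Coprime a b → f (a * b) = f a + f b)
    (hbound : ∃ C : ℝ, ∀ m : ℕ, 2 ≤ m → |f m| ≤ C * Real.log m) :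
    ∃ C : ℝ, ∀ n : ℕ, 2 ≤ n →
      |(∑ q ∈ ppow n, f (q.1 ^ q.2) / (q.1 : ℝ) ^ q.2)
        - ∑ p ∈ primesLE n, f p / p| ≤ C :=
  additive_mean_reduction_general f hbound
end
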